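/- arXiv:1705.01447 — 4 statements merged into one kernel-verified Lean document; each statement's English description precedes it below -/
import Mathlib

section
/- For every k ≥ 1 and every nonzero q ∈ ℂ, the generalized Kulish–Sklyanin matrix R₁₂(q) = Σ_{i,j} q^{-1/2} e_{ii}⊗e_{jj} + Σ_i (q^{1/2} - q^{-1/2}) e_{ii}⊗e_{ii} + Σ_{j>i} (q^{1/2} - q^{-3/2}) e_{ij}⊗e_{ji} acting on ℂᵏ⊗ℂᵏ satisfies the quantum Yang–Baxter equation R₁₂R₁₃R₂₃ = R₂₃R₁₃R₁₂ on ℂᵏ⊗ℂᵏ⊗ℂᵏ. -/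
open Matrix

/-- The generalized Kulish–Sklyanin R-matrix on `ℂ^k ⊗ ℂ^k`, written in terms of
`s = q^{1/2}` (so `q = s^2`):
`R = Σ_{i,j} q^{-1/2} e_{ii}⊗e_{jj} + Σ_i (q^{1/2}-q^{-1/2}) e_{ii}⊗e_{ii}
   + Σ_{j>i} (q^{1/2}-q^{-3/2}) e_{ij}⊗e_{ji}`. -/
noncomputable def KS (k : ℕ) (s : ℂ) : Matrix (Fin k × Fin k) (Fin k × Fin k) ℂ :=
  fun p q =>
    (if p = q then s⁻¹ else 0) +
    (if p = q ∧ p.1 = p.2 then s - s⁻¹ else 0) +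
    (if p.1 < p.2 ∧ q.1 = p.2 ∧ q.2 = p.1 then s - s⁻¹ ^ 3 else 0)

/-- `R₁₂ = R ⊗ Id` acting on the first two factors of `ℂ^k ⊗ ℂ^k ⊗ ℂ^k`. -/
def lift12 {k : ℕ} (R : Matrix (Fin k × Fin k) (Fin k × Fin k) ℂ) :
    Matrix (Fin k × Fin k × Fin k) (Fin k × Fin k × Fin k) ℂ :=
  fun p q => R (p.1, p.2.1) (q.1, q.2.1) * (if p.2.2 = q.2.2 then 1 else 0)

/-- `R₁₃` acting on the first and third factors. -/
def lift13 {k : ℕ} (R : Matrix (Fin k × Fin k) (Fin k × Fin k) ℂ) :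
    Matrix (Fin k × Fin k × Fin k) (Fin k × Fin k × Fin k) ℂ :=
  fun p q => R (p.1, p.2.2) (q.1, q.2.2) * (if p.2.1 = q.2.1 then 1 else 0)

/-- `R₂₃` acting on the last two factors. -/
def lift23 {k : ℕ} (R : Matrix (Fin k × Fin k) (Fin k × Fin k) ℂ) :
    Matrix (Fin k × Fin k × Fin k) (Fin k × Fin k × Fin k) ℂ :=
  fun p q => R (p.2.1, p.2.2) (q.2.1, q.2.2) * (if p.1 = q.1 then 1 else 0)

/-- diagonal coefficient -/
noncomputable def KSa {k : ℕ} (s : ℂ) (x y : Fin k) : ℂ := if x = y then s else s⁻¹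
/-- off-diagonal coefficient -/
noncomputable def KSb {k : ℕ} (s : ℂ) (x y : Fin k) : ℂ := if x < y then s - s⁻¹ ^ 3 else 0

lemma KSa_eq {k : ℕ} (s : ℂ) {x y : Fin k} (h : x = y) : KSa s x y = s := by simp [KSa, h]
lemma KSa_ne {k : ℕ} (s : ℂ) {x y : Fin k} (h : ¬ x = y) : KSa s x y = s⁻¹ := by simp [KSa, h]
lemma KSb_lt {k : ℕ} (s : ℂ) {x y : Fin k} (h : x < y) : KSb s x y = s - s⁻¹ ^ 3 := by
  simp [KSb, h]
lemma KSb_nlt {k : ℕ} (s : ℂ) {x y : Fin k} (h : ¬ x < y) : KSb s x y = 0 := by simp [KSb, h]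

lemma KS_eq (k : ℕ) (s : ℂ) (p q : Fin k × Fin k) :
    KS k s p q = KSa s p.1 p.2 * (if q = p then 1 else 0)
      + KSb s p.1 p.2 * (if q = (p.2, p.1) then 1 else 0) := by
  rcases p with ⟨a, b⟩
  rcases q with ⟨c, d⟩
  simp only [KS, KSa, KSb, Prod.mk.injEq, Prod.ext_iff]
  split_ifs <;> first
    | ring1
    | (exfalso; omega)

lemma lift12_apply (k : ℕ) (s : ℂ) (p r : Fin k × Fin k × Fin k) :
    lift12 (KS k s) p r = KSa s p.1 p.2.1 * (if r = p then 1 else 0)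
      + KSb s p.1 p.2.1 * (if r = (p.2.1, p.1, p.2.2) then 1 else 0) := by
  rcases p with ⟨a, b, c⟩
  rcases r with ⟨x, y, z⟩
  simp only [lift12, KS_eq, Prod.mk.injEq, Prod.ext_iff]
  split_ifs <;> first
    | ring1
    | (exfalso; omega)

lemma lift13_apply (k : ℕ) (s : ℂ) (p r : Fin k × Fin k × Fin k) :
    lift13 (KS k s) p r = KSa s p.1 p.2.2 * (if r = p then 1 else 0)
      + KSb s p.1 p.2.2 * (if r = (p.2.2, p.2.1, p.1) then 1 else 0) := by
  rcases p with ⟨a, b, c⟩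
  rcases r with ⟨x, y, z⟩
  simp only [lift13, KS_eq, Prod.mk.injEq, Prod.ext_iff]
  split_ifs <;> first
    | ring1
    | (exfalso; omega)

lemma lift23_apply (k : ℕ) (s : ℂ) (p r : Fin k × Fin k × Fin k) :
    lift23 (KS k s) p r = KSa s p.2.1 p.2.2 * (if r = p then 1 else 0)
      + KSb s p.2.1 p.2.2 * (if r = (p.1, p.2.2, p.2.1) then 1 else 0) := by
  rcases p with ⟨a, b, c⟩
  rcases r with ⟨x, y, z⟩
  simp only [lift23, KS_eq, Prod.mk.injEq, Prod.ext_iff]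
  split_ifs <;> first
    | ring1
    | (exfalso; omega)

lemma mul_two_delta {ι : Type*} [Fintype ι] [DecidableEq ι] {a b : ℂ} {c₁ c₂ : ι}
    {M : Matrix ι ι ℂ} (X : Matrix ι ι ℂ) {p : ι}
    (h : ∀ r, M p r = a * (if r = c₁ then 1 else 0) + b * (if r = c₂ then 1 else 0)) (q : ι) :
    (M * X) p q = a * X c₁ q + b * X c₂ q := by
  rw [Matrix.mul_apply]
  simp only [h, add_mul, mul_assoc, ite_mul, one_mul, zero_mul, mul_zero,
    Finset.sum_add_distrib, ← Finset.mul_sum, Finset.sum_ite_eq', Finset.mem_univ, if_true]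

lemma lift12_mul (k : ℕ) (s : ℂ) (X : Matrix (Fin k × Fin k × Fin k) (Fin k × Fin k × Fin k) ℂ)
    (p q : Fin k × Fin k × Fin k) :
    (lift12 (KS k s) * X) p q = KSa s p.1 p.2.1 * X p q
      + KSb s p.1 p.2.1 * X (p.2.1, p.1, p.2.2) q :=
  mul_two_delta X (fun r => lift12_apply k s p r) q

lemma lift13_mul (k : ℕ) (s : ℂ) (X : Matrix (Fin k × Fin k × Fin k) (Fin k × Fin k × Fin k) ℂ)
    (p q : Fin k × Fin k × Fin k) :
    (lift13 (KS k s) * X) p q = KSa s p.1 p.2.2 * X p q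
      + KSb s p.1 p.2.2 * X (p.2.2, p.2.1, p.1) q :=
  mul_two_delta X (fun r => lift13_apply k s p r) q

lemma lift23_mul (k : ℕ) (s : ℂ) (X : Matrix (Fin k × Fin k × Fin k) (Fin k × Fin k × Fin k) ℂ)
    (p q : Fin k × Fin k × Fin k) :
    (lift23 (KS k s) * X) p q = KSa s p.2.1 p.2.2 * X p q
      + KSb s p.2.1 p.2.2 * X (p.1, p.2.2, p.2.1) q :=
  mul_two_delta X (fun r => lift23_apply k s p r) q


set_option maxHeartbeats 2000000

/-- For every `k ≥ 1` and every nonzero `q ∈ ℂ` (with `s = q^{1/2}` a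
nonzero square root), the generalized Kulish–Sklyanin matrix satisfies the quantum
Yang–Baxter equation `R₁₂R₁₃R₂₃ = R₂₃R₁₃R₁₂` on `ℂ^k⊗ℂ^k⊗ℂ^k`. -/
theorem KS_QYBE (k : ℕ) (hk : 1 ≤ k) (s : ℂ) (hs : s ≠ 0) :
    lift12 (KS k s) * lift13 (KS k s) * lift23 (KS k s) =
      lift23 (KS k s) * lift13 (KS k s) * lift12 (KS k s) := by
  ext p q
  obtain ⟨i, j, l⟩ := p
  obtain ⟨a, b, c⟩ := q
  rw [mul_assoc, mul_assoc]
  simp only [lift12_mul, lift13_mul, lift23_mul, lift23_apply, lift12_apply, Prod.mk.injEq]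
  rcases lt_trichotomy i j with h1 | h1 | h1 <;>
    rcases lt_trichotomy i l with h2 | h2 | h2 <;>
      rcases lt_trichotomy j l with h3 | h3 | h3 <;>
  first
    | (exfalso; omega)
    | (simp (disch := omega) only [KSa_eq, KSa_ne, KSb_lt, KSb_nlt]
       split_ifs <;>
         first
           | (exfalso; omega)
           | (field_simp <;>
              first
                | ring1
                | (left; ring1)
                | (right; ring1)
                | (rw [div_eq_iff (by simp [hs])]; ring1)
                | (rw [eq_div_iff (by simp [hs])]; ring1)))
end

section
/- For the generalized Kulish–Sklyanin matrix R₁₂(q) on ℂᵏ⊗ℂᵏ, the identity q^{1/2} R₁₂ − q^{-1/2} R₁₂^{-T} = (q − q^{-1}) P₁₂ holds, where P₁₂ = Σ_{i,j} e_{ij}⊗e_{ji} is the permutation operator and R₁₂^{-T} denotes the inverse of the transpose of R₁₂. -/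
/-!
Write `D = Σᵢ eᵢᵢ ⊗ eᵢᵢ` and `N = Σ_{i<j} eᵢⱼ ⊗ eⱼᵢ`. Then `D` is idempotent, `N² = DN = ND = 0`,
and `R = s⁻¹ + (s - s⁻¹) D + (s - s⁻³) N`, so `1, D, N` span a commutative algebra containing `R`,
in which `R⁻¹ = s + (s⁻¹ - s) D + (s⁻¹ - s³) N`. Since `Dᵀ = D`, transposing gives `R^{-T}`, and as
`P = D + N + Nᵀ` the skein relation becomes a comparison of the coefficients of `1, D, N, Nᵀ`.
-/

open Matrix

/-- The permutation operator `P₁₂ = Σ_{i,j} e_{ij} ⊗ e_{ji}` on `ℂ^k ⊗ ℂ^k`. -/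
def Pmat (k : ℕ) : Matrix (Fin k × Fin k) (Fin k × Fin k) ℂ :=
  fun p q => if p.1 = q.2 ∧ p.2 = q.1 then 1 else 0

theorem mul_eq_of_isIdempotentElem_of_mul_self_eq_zero {R A : Type*} [CommRing R] [Ring A]
    [Algebra R A] {D N : A} (hD : IsIdempotentElem D) (hDN : D * N = 0) (hND : N * D = 0)
    (hN : N * N = 0) (a b c a' b' c' : R) :
    (a • 1 + b • D + c • N) * (a' • 1 + b' • D + c' • N) =
      (a * a') • 1 + (a * b' + b * a' + b * b') • D + (a * c' + c * a') • N := by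
  simp only [mul_add, add_mul, smul_mul_smul, one_mul, mul_one, hD.eq, hDN, hND, hN, smul_zero]
  module

namespace Matrix

variable (ι R : Type*) [LinearOrder ι] [Semiring R]

def diagProj : Matrix (ι × ι) (ι × ι) R :=
  diagonal fun p => if p.1 = p.2 then 1 else 0

def upperFlip : Matrix (ι × ι) (ι × ι) R :=
  of fun p q => if p.1 < p.2 ∧ q.1 = p.2 ∧ q.2 = p.1 then 1 else 0

variable {ι R}

theorem diagProj_transpose : (diagProj ι R)ᵀ = diagProj ι R :=
  diagonal_transpose _

variable [Fintype ι]

theorem isIdempotentElem_diagProj : IsIdempotentElem (diagProj ι R) := by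
  simp only [IsIdempotentElem, diagProj, diagonal_mul_diagonal]
  congr 1
  ext p
  split_ifs <;> simp

theorem diagProj_mul_upperFlip : diagProj ι R * upperFlip ι R = 0 := by
  ext p q
  simp only [diagProj, upperFlip, diagonal_mul, of_apply, zero_apply]
  split_ifs <;> simp_all

theorem upperFlip_mul_diagProj : upperFlip ι R * diagProj ι R = 0 := by
  ext p q
  simp only [diagProj, upperFlip, mul_diagonal, of_apply, zero_apply]
  split_ifs <;> simp_all
  grind

theorem upperFlip_mul_self : upperFlip ι R * upperFlip ι R = 0 := by
  ext p r
  refine Finset.sum_eq_zero fun q _ => ?_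
  simp only [upperFlip, of_apply]
  split_ifs <;> simp_all
  grind

end Matrix

theorem KS_eq_s2 (k : ℕ) (s : ℂ) :
    KS k s = s⁻¹ • 1 + (s - s⁻¹) • diagProj (Fin k) ℂ + (s - s⁻¹ ^ 3) • upperFlip (Fin k) ℂ := by
  ext p q
  simp [KS, diagProj, upperFlip, one_apply, diagonal_apply, ite_and]

theorem Pmat_eq (k : ℕ) :
    Pmat k = diagProj (Fin k) ℂ + upperFlip (Fin k) ℂ + (upperFlip (Fin k) ℂ)ᵀ := by
  ext p q
  simp only [Pmat, diagProj, upperFlip, Matrix.add_apply, diagonal_apply, transpose_apply,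
    of_apply]
  split_ifs <;> grind

theorem KS_inv (k : ℕ) {s : ℂ} (hs : s ≠ 0) :
    (KS k s)⁻¹ = s • 1 + (s⁻¹ - s) • diagProj (Fin k) ℂ + (s⁻¹ - s ^ 3) • upperFlip (Fin k) ℂ := by
  refine inv_eq_right_inv ?_
  rw [KS_eq_s2, mul_eq_of_isIdempotentElem_of_mul_self_eq_zero isIdempotentElem_diagProj
    diagProj_mul_upperFlip upperFlip_mul_diagProj upperFlip_mul_self]
  match_scalars <;> field_simp <;> ring

/-- For the generalized Kulish–Sklyanin matrix `R₁₂(q)` on `ℂ^k⊗ℂ^k`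
(with `s = q^{1/2}` nonzero), the identity
`q^{1/2} R₁₂ − q^{-1/2} R₁₂^{-T} = (q − q^{-1}) P₁₂` holds, where `R^{-T}` is the
inverse of the transpose of `R` and `P₁₂` the permutation operator. -/
theorem KS_skein (k : ℕ) (s : ℂ) (hs : s ≠ 0) :
    s • KS k s - s⁻¹ • ((KS k s)ᵀ)⁻¹ = (s ^ 2 - (s ^ 2)⁻¹) • Pmat k := by
  rw [← transpose_nonsing_inv, KS_inv k hs, KS_eq_s2, Pmat_eq]
  simp only [transpose_add, transpose_smul, transpose_one, diagProj_transpose]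
  match_scalars <;> field_simp <;> ring
end

section
/- Let {·,·} be a Poisson bracket on the polynomial algebra generated by entries m_{ij} (1 ≤ i,j ≤ k) of a matrix M, defined by {m_{i,j}, m_{k,l}} = −Σ_s m_{i,s} m_{s,l} δ_{j,k} θ(s−j) + Σ_s m_{s,j} m_{k,s} δ_{i,l} θ(s−i) + m_{k,j} m_{i,l} (θ(l−j) − θ(k−i)), where θ(x) = sign(x)+1. Then for every p ≥ 1, the function tr(Mᵖ) = Σ_{i₁,…,iₚ} m_{i₁,i₂}m_{i₂,i₃}⋯m_{iₚ,i₁} satisfies {tr(Mᵖ), m_{k,l}} = 0 for all k, l. -/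
open MvPolynomial

/-- `θ(x) = sign(x) + 1`, i.e. `θ(x) = 0` for `x < 0`, `θ(0) = 1`, `θ(x) = 2` for `x > 0`. -/
def theta (x : ℤ) : ℤ := if x < 0 then 0 else if x = 0 then 1 else 2

variable {k : ℕ}

/-- The quadratic bracket on generators:
`{m_{i,j}, m_{k,l}} = −Σ_s m_{i,s} m_{s,l} δ_{j,k} θ(s−j) + Σ_s m_{s,j} m_{k,s} δ_{i,l} θ(s−i)
 + m_{k,j} m_{i,l} (θ(l−j) − θ(k−i))`. -/
noncomputable def B8 (p q : Fin k × Fin k) : MvPolynomial (Fin k × Fin k) ℂ :=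
  (if p.2 = q.1 then
    -∑ s : Fin k, X (p.1, s) * X (s, q.2) * C ((theta ((s : ℕ) - (p.2 : ℕ) : ℤ) : ℂ)) else 0) +
  (if p.1 = q.2 then
    ∑ s : Fin k, X (s, p.2) * X (q.1, s) * C ((theta ((s : ℕ) - (p.1 : ℕ) : ℤ) : ℂ)) else 0) +
  X (q.1, p.2) * X (p.1, q.2) *
    C ((theta ((q.2 : ℕ) - (p.2 : ℕ) : ℤ) - theta ((q.1 : ℕ) - (p.1 : ℕ) : ℤ) : ℤ) : ℂ)

/-- The Leibniz (bi-derivation) extension of the bracket on generators to all polynomials: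
`{f, g} = Σ_{p,q} (∂f/∂m_p)(∂g/∂m_q)·{m_p, m_q}`. -/
noncomputable def pb8 (f g : MvPolynomial (Fin k × Fin k) ℂ) : MvPolynomial (Fin k × Fin k) ℂ :=
  ∑ p : Fin k × Fin k, ∑ q : Fin k × Fin k, pderiv p f * pderiv q g * B8 p q

/-- The generic matrix `M` whose entries are the polynomial generators `m_{i,j}`. -/
noncomputable def genM (k : ℕ) : Matrix (Fin k) (Fin k) (MvPolynomial (Fin k × Fin k) ℂ) :=
  fun i j => X (i, j)

lemma theta_add_theta (x y : ℤ) (h : x = -y) : theta x + theta y = 2 := by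
  subst h; unfold theta; split_ifs <;> omega

lemma C_theta_add (x y : ℤ) (h : x = -y) :
    (C ((theta x : ℂ)) : MvPolynomial (Fin k × Fin k) ℂ) + C ((theta y : ℂ)) = C 2 := by
  rw [← map_add, ← Int.cast_add, theta_add_theta x y h]
  norm_num

lemma sum_NM (n : ℕ) (c s : Fin k) :
    ∑ a : Fin k, (genM k ^ n) c a * X (a, s) = (genM k ^ (n + 1)) c s := by
  rw [pow_succ, Matrix.mul_apply]; rfl

lemma sum_MN (n : ℕ) (s c : Fin k) :
    ∑ b : Fin k, X (s, b) * (genM k ^ n) b c = (genM k ^ (n + 1)) s c := by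
  rw [pow_succ', Matrix.mul_apply]; rfl

lemma pderiv_pow_entry (n : ℕ) (a b i j : Fin k) :
    pderiv (a, b) ((genM k ^ n) i j) =
      ∑ r ∈ Finset.range n, (genM k ^ r) i a * (genM k ^ (n - 1 - r)) b j := by
  induction n generalizing i j with
  | zero =>
      simp only [pow_zero, Matrix.one_apply, Finset.range_zero, Finset.sum_empty]
      split_ifs <;> simp
  | succ n ih =>
      rw [pow_succ', Matrix.mul_apply, map_sum]
      have step : ∀ s : Fin k,
          pderiv (a, b) (genM k i s * (genM k ^ n) s j) =
          (if i = a ∧ s = b then ((genM k ^ n) s j) else 0)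
          + genM k i s * ∑ r ∈ Finset.range n, (genM k ^ r) s a * (genM k ^ (n - 1 - r)) b j := by
        intro s
        rw [pderiv_mul, ih]
        congr 1
        show pderiv (a,b) (X (i,s)) * (genM k ^ n) s j = _
        rw [pderiv_X, Pi.single_apply]
        by_cases h : (i, s) = (a, b)
        · simp [Prod.ext_iff] at h; simp [h]
        · simp [Prod.ext_iff] at h
          by_cases hi : i = a
          · simp [hi, h hi]
          · simp [hi]
      rw [Finset.sum_congr rfl fun s _ => step s, Finset.sum_add_distrib,
        Finset.sum_range_succ']
      have he : ∀ r : ℕ, n + 1 - 1 - (r + 1) = n - 1 - r := fun r => by omega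
      have hA : (∑ s : Fin k, if i = a ∧ s = b then (genM k ^ n) s j else 0)
          = (genM k ^ 0) i a * (genM k ^ (n + 1 - 1 - 0)) b j := by
        by_cases hi : i = a
        · subst hi; simp [Matrix.one_apply, Finset.sum_ite_eq']
        · simp [hi, Matrix.one_apply]
      have hB : (∑ s : Fin k, genM k i s *
            ∑ r ∈ Finset.range n, (genM k ^ r) s a * (genM k ^ (n - 1 - r)) b j)
          = ∑ r ∈ Finset.range n, (genM k ^ (r + 1)) i a * (genM k ^ (n + 1 - 1 - (r + 1))) b j := by
        simp only [Finset.mul_sum, he]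
        rw [Finset.sum_comm]
        refine Finset.sum_congr rfl fun r hr => ?_
        have hp : (genM k ^ (r + 1)) i a = ∑ s : Fin k, genM k i s * (genM k ^ r) s a := by
          rw [pow_succ', Matrix.mul_apply]
        rw [hp, Finset.sum_mul]
        exact Finset.sum_congr rfl fun s _ => (mul_assoc _ _ _).symm
      rw [hA, hB, add_comm]

lemma pderiv_trace_pow (n : ℕ) (a b : Fin k) :
    pderiv (a, b) ((genM k ^ n).trace)
      = (n : MvPolynomial (Fin k × Fin k) ℂ) * (genM k ^ (n - 1)) b a := by
  rw [Matrix.trace, map_sum]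
  simp only [Matrix.diag_apply, pderiv_pow_entry]
  rw [Finset.sum_comm]
  have h : ∀ r ∈ Finset.range n,
      ∑ i : Fin k, (genM k ^ r) i a * (genM k ^ (n - 1 - r)) b i = (genM k ^ (n - 1)) b a := by
    intro r hr
    have hrn := Finset.mem_range.mp hr
    rw [Finset.sum_congr rfl fun i _ => mul_comm _ _, ← Matrix.mul_apply, ← pow_add,
      show n - 1 - r + r = n - 1 by omega]
  rw [Finset.sum_congr rfl h, Finset.sum_const, Finset.card_range, nsmul_eq_mul]

lemma key (n : ℕ) (kk ll : Fin k) :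
    ∑ a : Fin k, ∑ b : Fin k, (genM k ^ n) b a * B8 (a, b) (kk, ll) = 0 := by
  have split : ∀ a b : Fin k, (genM k ^ n) b a * B8 (a, b) (kk, ll)
      = (if b = kk then
          (genM k ^ n) b a * -∑ s : Fin k, X (a, s) * X (s, ll) * C ((theta ((s : ℕ) - (b : ℕ) : ℤ) : ℂ)) else 0)
      + (if a = ll then
          (genM k ^ n) b a * ∑ s : Fin k, X (s, b) * X (kk, s) * C ((theta ((s : ℕ) - (a : ℕ) : ℤ) : ℂ)) else 0)
      + ((genM k ^ n) b a * (X (kk, b) * X (a, ll) *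
          C ((theta ((ll : ℕ) - (b : ℕ) : ℤ) : ℂ)))
        - (genM k ^ n) b a * (X (kk, b) * X (a, ll) *
          C ((theta ((kk : ℕ) - (a : ℕ) : ℤ) : ℂ)))) := by
    intro a b
    rw [B8]
    simp only [mul_add, mul_ite, mul_zero, Int.cast_sub, map_sub]
    ring
  rw [Finset.sum_congr rfl fun a _ => Finset.sum_congr rfl fun b _ => split a b]
  simp only [Finset.sum_add_distrib, Finset.sum_sub_distrib]
  have h1 : (∑ a : Fin k, ∑ b : Fin k, if b = kk then
        (genM k ^ n) b a * -∑ s : Fin k, X (a, s) * X (s, ll) * C ((theta ((s : ℕ) - (b : ℕ) : ℤ) : ℂ)) else 0)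
      = -∑ s : Fin k, (genM k ^ (n + 1)) kk s * (X (s, ll) * C ((theta ((s : ℕ) - (kk : ℕ) : ℤ) : ℂ))) := by
    simp only [Finset.sum_ite_eq', Finset.mem_univ, if_true, mul_neg, Finset.mul_sum]
    simp only [Finset.sum_neg_distrib]
    congr 1
    rw [Finset.sum_comm]
    refine Finset.sum_congr rfl fun s _ => ?_
    calc ∑ a : Fin k, (genM k ^ n) kk a * (X (a, s) * X (s, ll) * C ((theta ((s : ℕ) - (kk : ℕ) : ℤ) : ℂ)))
        = ∑ a : Fin k, ((genM k ^ n) kk a * X (a, s)) * (X (s, ll) * C ((theta ((s : ℕ) - (kk : ℕ) : ℤ) : ℂ))) :=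
          Finset.sum_congr rfl fun a _ => by ring
      _ = _ := by rw [← Finset.sum_mul, sum_NM]
  have h2 : (∑ a : Fin k, ∑ b : Fin k, if a = ll then
        (genM k ^ n) b a * ∑ s : Fin k, X (s, b) * X (kk, s) * C ((theta ((s : ℕ) - (a : ℕ) : ℤ) : ℂ)) else 0)
      = ∑ s : Fin k, (genM k ^ (n + 1)) s ll * (X (kk, s) * C ((theta ((s : ℕ) - (ll : ℕ) : ℤ) : ℂ))) := by
    rw [Finset.sum_comm]
    simp only [Finset.sum_ite_eq', Finset.mem_univ, if_true, Finset.mul_sum]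
    rw [Finset.sum_comm]
    refine Finset.sum_congr rfl fun s _ => ?_
    calc ∑ b : Fin k, (genM k ^ n) b ll * (X (s, b) * X (kk, s) * C ((theta ((s : ℕ) - (ll : ℕ) : ℤ) : ℂ)))
        = ∑ b : Fin k, (X (s, b) * (genM k ^ n) b ll) * (X (kk, s) * C ((theta ((s : ℕ) - (ll : ℕ) : ℤ) : ℂ))) :=
          Finset.sum_congr rfl fun b _ => by ring
      _ = _ := by rw [← Finset.sum_mul, sum_MN]
  have h3 : (∑ a : Fin k, ∑ b : Fin k,
        (genM k ^ n) b a * (X (kk, b) * X (a, ll) * C ((theta ((ll : ℕ) - (b : ℕ) : ℤ) : ℂ))))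
      = ∑ s : Fin k, (genM k ^ (n + 1)) s ll * (X (kk, s) * C ((theta ((ll : ℕ) - (s : ℕ) : ℤ) : ℂ))) := by
    rw [Finset.sum_comm]
    refine Finset.sum_congr rfl fun s _ => ?_
    calc ∑ a : Fin k, (genM k ^ n) s a * (X (kk, s) * X (a, ll) * C ((theta ((ll : ℕ) - (s : ℕ) : ℤ) : ℂ)))
        = ∑ a : Fin k, ((genM k ^ n) s a * X (a, ll)) * (X (kk, s) * C ((theta ((ll : ℕ) - (s : ℕ) : ℤ) : ℂ))) :=
          Finset.sum_congr rfl fun a _ => by ring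
      _ = _ := by rw [← Finset.sum_mul, sum_NM]
  have h4 : (∑ a : Fin k, ∑ b : Fin k,
        (genM k ^ n) b a * (X (kk, b) * X (a, ll) * C ((theta ((kk : ℕ) - (a : ℕ) : ℤ) : ℂ))))
      = ∑ s : Fin k, (genM k ^ (n + 1)) kk s * (X (s, ll) * C ((theta ((kk : ℕ) - (s : ℕ) : ℤ) : ℂ))) := by
    refine Finset.sum_congr rfl fun s _ => ?_
    calc ∑ b : Fin k, (genM k ^ n) b s * (X (kk, b) * X (s, ll) * C ((theta ((kk : ℕ) - (s : ℕ) : ℤ) : ℂ)))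
        = ∑ b : Fin k, (X (kk, b) * (genM k ^ n) b s) * (X (s, ll) * C ((theta ((kk : ℕ) - (s : ℕ) : ℤ) : ℂ))) :=
          Finset.sum_congr rfl fun b _ => by ring
      _ = _ := by rw [← Finset.sum_mul, sum_MN]
  rw [h1, h2, h3, h4]
  have hA : (∑ s : Fin k, (genM k ^ (n + 1)) s ll * (X (kk, s) * C ((theta ((s : ℕ) - (ll : ℕ) : ℤ) : ℂ))))
      + (∑ s : Fin k, (genM k ^ (n + 1)) s ll * (X (kk, s) * C ((theta ((ll : ℕ) - (s : ℕ) : ℤ) : ℂ))))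
      = ∑ s : Fin k, X (kk, s) * (genM k ^ (n + 1)) s ll * C 2 := by
    rw [← Finset.sum_add_distrib]
    refine Finset.sum_congr rfl fun s _ => ?_
    have h := C_theta_add (k := k) (((s : ℕ) : ℤ) - ((ll : ℕ) : ℤ)) (((ll : ℕ) : ℤ) - ((s : ℕ) : ℤ)) (by ring)
    calc (genM k ^ (n + 1)) s ll * (X (kk, s) * C ((theta ((s : ℕ) - (ll : ℕ) : ℤ) : ℂ)))
          + (genM k ^ (n + 1)) s ll * (X (kk, s) * C ((theta ((ll : ℕ) - (s : ℕ) : ℤ) : ℂ)))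
        = X (kk, s) * (genM k ^ (n + 1)) s ll *
            (C ((theta ((s : ℕ) - (ll : ℕ) : ℤ) : ℂ)) + C ((theta ((ll : ℕ) - (s : ℕ) : ℤ) : ℂ))) := by ring
      _ = _ := by rw [h]
  have hB : (∑ s : Fin k, (genM k ^ (n + 1)) kk s * (X (s, ll) * C ((theta ((s : ℕ) - (kk : ℕ) : ℤ) : ℂ))))
      + (∑ s : Fin k, (genM k ^ (n + 1)) kk s * (X (s, ll) * C ((theta ((kk : ℕ) - (s : ℕ) : ℤ) : ℂ))))
      = ∑ s : Fin k, (genM k ^ (n + 1)) kk s * X (s, ll) * C 2 := by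
    rw [← Finset.sum_add_distrib]
    refine Finset.sum_congr rfl fun s _ => ?_
    have h := C_theta_add (k := k) (((s : ℕ) : ℤ) - ((kk : ℕ) : ℤ)) (((kk : ℕ) : ℤ) - ((s : ℕ) : ℤ)) (by ring)
    calc (genM k ^ (n + 1)) kk s * (X (s, ll) * C ((theta ((s : ℕ) - (kk : ℕ) : ℤ) : ℂ)))
          + (genM k ^ (n + 1)) kk s * (X (s, ll) * C ((theta ((kk : ℕ) - (s : ℕ) : ℤ) : ℂ)))
        = (genM k ^ (n + 1)) kk s * X (s, ll) *
            (C ((theta ((s : ℕ) - (kk : ℕ) : ℤ) : ℂ)) + C ((theta ((kk : ℕ) - (s : ℕ) : ℤ) : ℂ))) := by ring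
      _ = _ := by rw [h]
  have h5 : (∑ s : Fin k, X (kk, s) * (genM k ^ (n + 1)) s ll * C 2)
      = ∑ s : Fin k, (genM k ^ (n + 1)) kk s * X (s, ll) * C 2 := by
    rw [← Finset.sum_mul, ← Finset.sum_mul, sum_MN, sum_NM]
  linear_combination hA - hB + h5

/-- For the quadratic Poisson bracket above, extended by Leibniz,
`tr(M^p)` Poisson-commutes with every generator `m_{k,l}`, for every `p ≥ 1`. -/
theorem trace_powers_Casimir (p : ℕ) (hp : 1 ≤ p) (kk ll : Fin k) :
    pb8 ((genM k ^ p).trace) (X (kk, ll)) = 0 := by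
  rw [pb8]
  simp only [pderiv_X, Pi.single_apply, mul_ite, mul_one, mul_zero, ite_mul, zero_mul,
    Finset.sum_ite_eq, Finset.mem_univ, if_true]
  rw [Fintype.sum_prod_type]
  simp only [pderiv_trace_pow]
  have hassoc : ∀ a b : Fin k,
      ((p : MvPolynomial (Fin k × Fin k) ℂ) * (genM k ^ (p - 1)) b a) * B8 (a, b) (kk, ll)
      = (p : MvPolynomial (Fin k × Fin k) ℂ) * ((genM k ^ (p - 1)) b a * B8 (a, b) (kk, ll)) :=
    fun a b => mul_assoc _ _ _
  rw [Finset.sum_congr rfl fun a _ => Finset.sum_congr rfl fun b _ => hassoc a b]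
  simp only [← Finset.mul_sum]
  rw [key]
  ring
end

section
/- For the quadratic Poisson bracket {m_{i,j}, m_{k,l}} = −Σ_s m_{i,s}m_{s,l}δ_{j,k}θ(s−j) + Σ_s m_{s,j}m_{k,s}δ_{i,l}θ(s−i) + m_{k,j}m_{i,l}(θ(l−j)−θ(k−i)) with θ(x)=sign(x)+1, the determinant det(M) is a Casimir: {det(M), m_{k,l}} = 0 for all k,l. -/
open MvPolynomial

variable {k : ℕ}

/-- Derivative of a product of variables. -/
lemma pderiv_prod_X {ι : Type*} {σ' : Type*} [DecidableEq σ'] [DecidableEq ι]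
    (p : σ') (s : Finset ι) (f : ι → σ') :
    pderiv p (∏ x ∈ s, (X (f x) : MvPolynomial σ' ℂ)) =
      ∑ x ∈ s, (if f x = p then ∏ y ∈ s.erase x, (X (f y) : MvPolynomial σ' ℂ) else 0) := by
  induction s using Finset.induction_on with
  | empty => simp [pderiv_one]
  | @insert a s ha ih =>
    rw [Finset.prod_insert ha, pderiv_mul, ih, Finset.sum_insert ha, Finset.erase_insert ha]
    rw [Finset.mul_sum]
    congr 1
    · rw [pderiv_X]
      by_cases h : f a = p
      · simp [h, Pi.single_apply]
      · simp [h, Pi.single_apply, Ne.symm]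
    · apply Finset.sum_congr rfl
      intro x hx
      by_cases h : f x = p
      · have hxa : x ≠ a := by rintro rfl; exact ha hx
        rw [if_pos h, if_pos h, Finset.erase_insert_of_ne hxa.symm,
          Finset.prod_insert (fun hh => ha (Finset.mem_of_mem_erase hh))]
      · simp [h]

lemma pderiv_det_expand (i j : Fin k) :
    pderiv (i, j) (Matrix.det (genM k)) =
      ∑ σ : Equiv.Perm (Fin k), (if σ j = i then
        (((Equiv.Perm.sign σ : ℤ) : MvPolynomial (Fin k × Fin k) ℂ)) *
          ∏ x ∈ Finset.univ.erase j, (X (σ x, x) : MvPolynomial (Fin k × Fin k) ℂ) else 0) := by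
  rw [Matrix.det_apply', map_sum]
  apply Finset.sum_congr rfl
  intro σ _
  have hc : (((Equiv.Perm.sign σ : ℤ)) : MvPolynomial (Fin k × Fin k) ℂ)
      = C (((Equiv.Perm.sign σ : ℤ) : ℂ)) := (map_intCast (C : ℂ →+* _) _).symm
  rw [hc, pderiv_C_mul]
  have hprod : (∏ x : Fin k, (genM k) (σ x) x) =
      ∏ x : Fin k, (X ((σ x, x) : Fin k × Fin k) : MvPolynomial (Fin k × Fin k) ℂ) := rfl
  rw [hprod, pderiv_prod_X, Finset.sum_eq_single j]
  · by_cases h : σ j = i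
    · simp [h, Prod.ext_iff]
    · simp [Prod.ext_iff, h]
  · intro x _ hx
    rw [if_neg]
    simp [Prod.ext_iff, hx]
  · simp

lemma pderiv_det_col (j : Fin k) (v : Fin k → MvPolynomial (Fin k × Fin k) ℂ) :
    ∑ i : Fin k, pderiv (i, j) (Matrix.det (genM k)) * v i
      = Matrix.det ((genM k).updateCol j v) := by
  rw [Matrix.det_apply' ((genM k).updateCol j v)]
  have h1 : ∀ σ : Equiv.Perm (Fin k),
      (∏ x : Fin k, ((genM k).updateCol j v) (σ x) x) =
        v (σ j) * ∏ x ∈ Finset.univ.erase j, (X (σ x, x) : MvPolynomial (Fin k × Fin k) ℂ) := by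
    intro σ
    rw [← Finset.mul_prod_erase Finset.univ _ (Finset.mem_univ j)]
    congr 1
    · simp [Matrix.updateCol_apply]
    · apply Finset.prod_congr rfl
      intro x hx
      simp [Matrix.updateCol_apply, Finset.ne_of_mem_erase hx, genM]
  calc ∑ i : Fin k, pderiv (i, j) (Matrix.det (genM k)) * v i
      = ∑ i : Fin k, ∑ σ : Equiv.Perm (Fin k), (if σ j = i then
          (((Equiv.Perm.sign σ : ℤ) : MvPolynomial (Fin k × Fin k) ℂ)) *
            (∏ x ∈ Finset.univ.erase j, (X (σ x, x) : MvPolynomial (Fin k × Fin k) ℂ)) * v i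
          else 0) := by
        apply Finset.sum_congr rfl
        intro i _
        rw [pderiv_det_expand, Finset.sum_mul]
        apply Finset.sum_congr rfl
        intro σ _
        split <;> simp
    _ = ∑ σ : Equiv.Perm (Fin k), ∑ i : Fin k, (if σ j = i then
          (((Equiv.Perm.sign σ : ℤ) : MvPolynomial (Fin k × Fin k) ℂ)) *
            (∏ x ∈ Finset.univ.erase j, (X (σ x, x) : MvPolynomial (Fin k × Fin k) ℂ)) * v i
          else 0) := Finset.sum_comm
    _ = _ := by
        apply Finset.sum_congr rfl
        intro σ _
        rw [Finset.sum_ite_eq Finset.univ (σ j)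
          (fun i => (((Equiv.Perm.sign σ : ℤ) : MvPolynomial (Fin k × Fin k) ℂ)) *
            (∏ x ∈ Finset.univ.erase j, (X (σ x, x) : MvPolynomial (Fin k × Fin k) ℂ)) * v i)]
        rw [h1 σ]
        simp [mul_assoc, mul_comm, mul_left_comm]

lemma pderiv_det_expand_row (i j : Fin k) :
    pderiv (i, j) (Matrix.det (genM k)) =
      ∑ σ : Equiv.Perm (Fin k), (if σ i = j then
        (((Equiv.Perm.sign σ : ℤ) : MvPolynomial (Fin k × Fin k) ℂ)) *
          ∏ x ∈ Finset.univ.erase i, (X (x, σ x) : MvPolynomial (Fin k × Fin k) ℂ) else 0) := by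
  rw [← Matrix.det_transpose (genM k), Matrix.det_apply', map_sum]
  apply Finset.sum_congr rfl
  intro σ _
  have hc : (((Equiv.Perm.sign σ : ℤ)) : MvPolynomial (Fin k × Fin k) ℂ)
      = C (((Equiv.Perm.sign σ : ℤ) : ℂ)) := (map_intCast (C : ℂ →+* _) _).symm
  rw [hc, pderiv_C_mul]
  have hprod : (∏ x : Fin k, (genM k).transpose (σ x) x) =
      ∏ x : Fin k, (X ((x, σ x) : Fin k × Fin k) : MvPolynomial (Fin k × Fin k) ℂ) := rfl
  rw [hprod, pderiv_prod_X, Finset.sum_eq_single i]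
  · by_cases h : σ i = j
    · simp [h, Prod.ext_iff]
    · simp [Prod.ext_iff, h]
  · intro x _ hx
    rw [if_neg]
    simp [Prod.ext_iff, hx]
  · simp

set_option maxHeartbeats 1000000 in
lemma pderiv_det_row (i : Fin k) (v : Fin k → MvPolynomial (Fin k × Fin k) ℂ) :
    ∑ j : Fin k, pderiv (i, j) (Matrix.det (genM k)) * v j
      = Matrix.det ((genM k).updateRow i v) := by
  rw [← Matrix.det_transpose ((genM k).updateRow i v),
    Matrix.det_apply' ((genM k).updateRow i v).transpose]
  have h1 : ∀ σ : Equiv.Perm (Fin k),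
      (∏ x : Fin k, ((genM k).updateRow i v).transpose (σ x) x) =
        v (σ i) * ∏ x ∈ Finset.univ.erase i, (X (x, σ x) : MvPolynomial (Fin k × Fin k) ℂ) := by
    intro σ
    rw [← Finset.mul_prod_erase Finset.univ _ (Finset.mem_univ i)]
    congr 1
    · simp [Matrix.transpose_apply, Matrix.updateRow_apply]
    · apply Finset.prod_congr rfl
      intro x hx
      simp [Matrix.transpose_apply, Matrix.updateRow_apply, Finset.ne_of_mem_erase hx, genM]
  calc ∑ j : Fin k, pderiv (i, j) (Matrix.det (genM k)) * v j
      = ∑ j : Fin k, ∑ σ : Equiv.Perm (Fin k), (if σ i = j then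
          (((Equiv.Perm.sign σ : ℤ) : MvPolynomial (Fin k × Fin k) ℂ)) *
            (∏ x ∈ Finset.univ.erase i, (X (x, σ x) : MvPolynomial (Fin k × Fin k) ℂ)) * v j
          else 0) := by
        apply Finset.sum_congr rfl
        intro j _
        rw [pderiv_det_expand_row, Finset.sum_mul]
        apply Finset.sum_congr rfl
        intro σ _
        split <;> simp
    _ = ∑ σ : Equiv.Perm (Fin k), ∑ j : Fin k, (if σ i = j then
          (((Equiv.Perm.sign σ : ℤ) : MvPolynomial (Fin k × Fin k) ℂ)) *
            (∏ x ∈ Finset.univ.erase i, (X (x, σ x) : MvPolynomial (Fin k × Fin k) ℂ)) * v j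
          else 0) := Finset.sum_comm
    _ = _ := by
        apply Finset.sum_congr rfl
        intro σ _
        rw [Finset.sum_ite_eq Finset.univ (σ i)
          (fun j => (((Equiv.Perm.sign σ : ℤ) : MvPolynomial (Fin k × Fin k) ℂ)) *
            (∏ x ∈ Finset.univ.erase i, (X (x, σ x) : MvPolynomial (Fin k × Fin k) ℂ)) * v j)]
        rw [h1 σ]
        simp [mul_assoc, mul_comm, mul_left_comm]

lemma key_col (j t : Fin k) :
    ∑ i : Fin k, pderiv (i, j) (Matrix.det (genM k)) * X (i, t)
      = if j = t then Matrix.det (genM k) else 0 := by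
  have := pderiv_det_col (k := k) j (fun i => X (i, t))
  rw [this]
  by_cases h : j = t
  · subst h
    rw [if_pos rfl]
    congr 1
    exact Matrix.updateCol_eq_self _ _
  · rw [if_neg h]
    exact Matrix.det_updateCol_eq_zero (fun hh => h (hh.symm))

lemma key_row (i t : Fin k) :
    ∑ j : Fin k, pderiv (i, j) (Matrix.det (genM k)) * X (t, j)
      = if i = t then Matrix.det (genM k) else 0 := by
  have := pderiv_det_row (k := k) i (fun j => X (t, j))
  rw [this]
  by_cases h : i = t
  · subst h
    rw [if_pos rfl]
    congr 1
    exact Matrix.updateRow_eq_self _ _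
  · rw [if_neg h]
    exact Matrix.det_updateRow_eq_zero (fun hh => h (hh.symm))


lemma S1_eq (kk ll : Fin k) :
    (∑ i : Fin k, ∑ j : Fin k, pderiv (i, j) (Matrix.det (genM k)) *
      (if j = kk then
        -∑ s : Fin k, X (i, s) * X (s, ll) * C ((theta ((s : ℕ) - (j : ℕ) : ℤ) : ℂ)) else 0))
    = -(Matrix.det (genM k) * (X (kk, ll) * C ((theta ((kk : ℕ) - (kk : ℕ) : ℤ) : ℂ)))) := by
  have h1 : ∀ i : Fin k, (∑ j : Fin k, pderiv (i, j) (Matrix.det (genM k)) *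
      (if j = kk then
        -∑ s : Fin k, X (i, s) * X (s, ll) * C ((theta ((s : ℕ) - (j : ℕ) : ℤ) : ℂ)) else 0))
      = -∑ s : Fin k, pderiv (i, kk) (Matrix.det (genM k)) *
          (X (i, s) * X (s, ll) * C ((theta ((s : ℕ) - (kk : ℕ) : ℤ) : ℂ))) := by
    intro i
    rw [Finset.sum_eq_single kk]
    · rw [if_pos rfl, mul_neg, Finset.mul_sum]
    · intro j _ hj; rw [if_neg hj, mul_zero]
    · simp
  rw [Finset.sum_congr rfl (fun i _ => h1 i), Finset.sum_neg_distrib]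
  congr 1
  rw [Finset.sum_comm]
  have h2 : ∀ s : Fin k, (∑ i : Fin k, pderiv (i, kk) (Matrix.det (genM k)) *
      (X (i, s) * X (s, ll) * C ((theta ((s : ℕ) - (kk : ℕ) : ℤ) : ℂ))))
      = (if kk = s then Matrix.det (genM k) else 0) *
          (X (s, ll) * C ((theta ((s : ℕ) - (kk : ℕ) : ℤ) : ℂ))) := by
    intro s
    rw [← key_col kk s, Finset.sum_mul]
    apply Finset.sum_congr rfl
    intro i _
    ring
  rw [Finset.sum_congr rfl (fun s _ => h2 s)]
  simp only [ite_mul, zero_mul]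
  rw [Finset.sum_ite_eq Finset.univ kk
    (fun s => Matrix.det (genM k) * (X (s, ll) * C ((theta ((s : ℕ) - (kk : ℕ) : ℤ) : ℂ))))]
  simp

lemma S2_eq (kk ll : Fin k) :
    (∑ i : Fin k, ∑ j : Fin k, pderiv (i, j) (Matrix.det (genM k)) *
      (if i = ll then
        ∑ s : Fin k, X (s, j) * X (kk, s) * C ((theta ((s : ℕ) - (i : ℕ) : ℤ) : ℂ)) else 0))
    = Matrix.det (genM k) * (X (kk, ll) * C ((theta ((ll : ℕ) - (ll : ℕ) : ℤ) : ℂ))) := by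
  have h1 : ∀ i : Fin k, (∑ j : Fin k, pderiv (i, j) (Matrix.det (genM k)) *
      (if i = ll then
        ∑ s : Fin k, X (s, j) * X (kk, s) * C ((theta ((s : ℕ) - (i : ℕ) : ℤ) : ℂ)) else 0))
      = if i = ll then (∑ j : Fin k, ∑ s : Fin k, pderiv (ll, j) (Matrix.det (genM k)) *
          (X (s, j) * X (kk, s) * C ((theta ((s : ℕ) - (ll : ℕ) : ℤ) : ℂ)))) else 0 := by
    intro i
    by_cases h : i = ll
    · subst h
      rw [if_pos rfl]
      apply Finset.sum_congr rfl
      intro j _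
      rw [if_pos rfl, Finset.mul_sum]
    · rw [if_neg h]
      apply Finset.sum_eq_zero
      intro j _
      rw [if_neg h, mul_zero]
  rw [Finset.sum_congr rfl (fun i _ => h1 i),
    Finset.sum_ite_eq' Finset.univ ll
      (fun _ => (∑ j : Fin k, ∑ s : Fin k, pderiv (ll, j) (Matrix.det (genM k)) *
          (X (s, j) * X (kk, s) * C ((theta ((s : ℕ) - (ll : ℕ) : ℤ) : ℂ))))),
    if_pos (Finset.mem_univ ll), Finset.sum_comm]
  have h2 : ∀ s : Fin k, (∑ j : Fin k, pderiv (ll, j) (Matrix.det (genM k)) *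
      (X (s, j) * X (kk, s) * C ((theta ((s : ℕ) - (ll : ℕ) : ℤ) : ℂ))))
      = (if ll = s then Matrix.det (genM k) else 0) *
          (X (kk, s) * C ((theta ((s : ℕ) - (ll : ℕ) : ℤ) : ℂ))) := by
    intro s
    rw [← key_row ll s, Finset.sum_mul]
    apply Finset.sum_congr rfl
    intro j _
    ring
  rw [Finset.sum_congr rfl (fun s _ => h2 s)]
  simp only [ite_mul, zero_mul]
  rw [Finset.sum_ite_eq Finset.univ ll
    (fun s => Matrix.det (genM k) * (X (kk, s) * C ((theta ((s : ℕ) - (ll : ℕ) : ℤ) : ℂ))))]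
  simp

lemma S3a_eq (kk ll : Fin k) :
    (∑ i : Fin k, ∑ j : Fin k, pderiv (i, j) (Matrix.det (genM k)) *
      (X (kk, j) * X (i, ll) * C ((theta ((ll : ℕ) - (j : ℕ) : ℤ) : ℂ))))
    = Matrix.det (genM k) * (X (kk, ll) * C ((theta ((ll : ℕ) - (ll : ℕ) : ℤ) : ℂ))) := by
  rw [Finset.sum_comm]
  have h2 : ∀ j : Fin k, (∑ i : Fin k, pderiv (i, j) (Matrix.det (genM k)) *
      (X (kk, j) * X (i, ll) * C ((theta ((ll : ℕ) - (j : ℕ) : ℤ) : ℂ))))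
      = (if j = ll then Matrix.det (genM k) else 0) *
          (X (kk, j) * C ((theta ((ll : ℕ) - (j : ℕ) : ℤ) : ℂ))) := by
    intro j
    rw [← key_col j ll, Finset.sum_mul]
    apply Finset.sum_congr rfl
    intro i _
    ring
  rw [Finset.sum_congr rfl (fun j _ => h2 j)]
  simp only [ite_mul, zero_mul]
  rw [Finset.sum_ite_eq' Finset.univ ll
    (fun j => Matrix.det (genM k) * (X (kk, j) * C ((theta ((ll : ℕ) - (j : ℕ) : ℤ) : ℂ))))]
  simp

lemma S3b_eq (kk ll : Fin k) :
    (∑ i : Fin k, ∑ j : Fin k, pderiv (i, j) (Matrix.det (genM k)) *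
      (X (kk, j) * X (i, ll) * C ((theta ((kk : ℕ) - (i : ℕ) : ℤ) : ℂ))))
    = Matrix.det (genM k) * (X (kk, ll) * C ((theta ((kk : ℕ) - (kk : ℕ) : ℤ) : ℂ))) := by
  have h2 : ∀ i : Fin k, (∑ j : Fin k, pderiv (i, j) (Matrix.det (genM k)) *
      (X (kk, j) * X (i, ll) * C ((theta ((kk : ℕ) - (i : ℕ) : ℤ) : ℂ))))
      = (if i = kk then Matrix.det (genM k) else 0) *
          (X (i, ll) * C ((theta ((kk : ℕ) - (i : ℕ) : ℤ) : ℂ))) := by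
    intro i
    rw [← key_row i kk, Finset.sum_mul]
    apply Finset.sum_congr rfl
    intro j _
    ring
  rw [Finset.sum_congr rfl (fun i _ => h2 i)]
  simp only [ite_mul, zero_mul]
  rw [Finset.sum_ite_eq' Finset.univ kk
    (fun i => Matrix.det (genM k) * (X (i, ll) * C ((theta ((kk : ℕ) - (i : ℕ) : ℤ) : ℂ))))]
  simp

/-- The determinant is a Casimir of the quadratic bracket:
`{det M, m_{k,l}} = 0` for all `k, l`. -/
theorem det_Casimir (kk ll : Fin k) :
    pb8 (Matrix.det (genM k)) (X (kk, ll)) = 0 := by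
  unfold pb8
  have hq : ∀ p : Fin k × Fin k,
      (∑ q : Fin k × Fin k, pderiv p (Matrix.det (genM k)) *
          pderiv q (X (kk, ll) : MvPolynomial (Fin k × Fin k) ℂ) * B8 p q)
        = pderiv p (Matrix.det (genM k)) * B8 p (kk, ll) := by
    intro p
    rw [Finset.sum_eq_single ((kk, ll) : Fin k × Fin k)]
    · simp
    · intro q _ hne
      rw [pderiv_X_of_ne (Ne.symm hne), mul_zero, zero_mul]
    · simp
  rw [Finset.sum_congr rfl (fun p _ => hq p), Fintype.sum_prod_type]
  have hB : ∀ i j : Fin k, pderiv (i, j) (Matrix.det (genM k)) * B8 (i, j) (kk, ll)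
      = pderiv (i, j) (Matrix.det (genM k)) *
          (if j = kk then
            -∑ s : Fin k, X (i, s) * X (s, ll) * C ((theta ((s : ℕ) - (j : ℕ) : ℤ) : ℂ)) else 0)
      + pderiv (i, j) (Matrix.det (genM k)) *
          (if i = ll then
            ∑ s : Fin k, X (s, j) * X (kk, s) * C ((theta ((s : ℕ) - (i : ℕ) : ℤ) : ℂ)) else 0)
      + (pderiv (i, j) (Matrix.det (genM k)) *
          (X (kk, j) * X (i, ll) * C ((theta ((ll : ℕ) - (j : ℕ) : ℤ) : ℂ)))
        - pderiv (i, j) (Matrix.det (genM k)) *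
          (X (kk, j) * X (i, ll) * C ((theta ((kk : ℕ) - (i : ℕ) : ℤ) : ℂ)))) := by
    intro i j
    have hc : (((theta ((ll : ℕ) - (j : ℕ) : ℤ) - theta ((kk : ℕ) - (i : ℕ) : ℤ) : ℤ)) : ℂ)
        = ((theta ((ll : ℕ) - (j : ℕ) : ℤ) : ℂ)) - ((theta ((kk : ℕ) - (i : ℕ) : ℤ) : ℂ)) := by
      push_cast; ring
    simp only [B8, hc, map_sub]
    ring
  rw [Finset.sum_congr rfl (fun i _ => Finset.sum_congr rfl (fun j _ => hB i j))]
  simp only [Finset.sum_add_distrib, Finset.sum_sub_distrib]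
  rw [S1_eq kk ll, S2_eq kk ll, S3a_eq kk ll, S3b_eq kk ll]
  simp only [Nat.cast_sub, sub_self]
  ring
end
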